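/- If M satisfies the s-RIP with constant δ, then for any two disjoint subsets S, T ⊆ {1,…,n} with |S| + |T| ≤ s and any vectors u supported on S and w supported on T, |⟨Mu, Mw⟩| ≤ δ·‖u‖₂·‖w‖₂. -/

import Mathlib

/-!
By polarization, `4 ⟪Mu, Mw⟫ = ‖M(u + w)‖² - ‖M(u - w)‖²`. Since `u ⊥ w`, both `u ± w` have
squared norm `‖u‖² + ‖w‖²` and are supported in `S ∪ T`, so the RIP bounds the difference by
`2δ (‖u‖² + ‖w‖²)`. Applying this to `‖w‖ u` and `‖u‖ w`, which have equal norms, turns the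
right-hand side into `4δ ‖u‖² ‖w‖²`, i.e. `⟪Mu, Mw⟫ ≤ δ ‖u‖ ‖w‖`; replacing `w` by `-w` bounds
the absolute value.
-/

open Finset Function Matrix

section DotProduct

variable {n R : Type*} [Fintype n] [CommRing R]

theorem sum_sq_eq_dotProduct_self (z : n → R) : ∑ i, z i ^ 2 = z ⬝ᵥ z := by
  simp only [dotProduct, sq]

theorem four_mul_dotProduct_eq (x y : n → R) :
    4 * (x ⬝ᵥ y) = (x + y) ⬝ᵥ (x + y) - (x - y) ⬝ᵥ (x - y) := by
  simp only [add_dotProduct, dotProduct_add, sub_dotProduct, dotProduct_sub, dotProduct_comm y x]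
  ring

theorem add_dotProduct_add_of_dotProduct_eq_zero {u w : n → R} (h : u ⬝ᵥ w = 0) :
    (u + w) ⬝ᵥ (u + w) = u ⬝ᵥ u + w ⬝ᵥ w := by
  simp only [add_dotProduct, dotProduct_add, dotProduct_comm w u, h]
  ring

theorem sub_dotProduct_sub_of_dotProduct_eq_zero {u w : n → R} (h : u ⬝ᵥ w = 0) :
    (u - w) ⬝ᵥ (u - w) = u ⬝ᵥ u + w ⬝ᵥ w := by
  simp only [sub_dotProduct, dotProduct_sub, dotProduct_comm w u, h]
  ring

theorem dotProduct_eq_zero_of_disjoint_support {u w : n → R}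
    (h : Disjoint (support u) (support w)) : u ⬝ᵥ w = 0 :=
  Finset.sum_eq_zero fun i _ => by
    by_contra hi
    exact Set.disjoint_left.1 h (left_ne_zero_of_mul hi) (right_ne_zero_of_mul hi)

end DotProduct

def IsRestrictedIsometryOn {m n : Type*} [Fintype m] [Fintype n]
    (M : Matrix m n ℝ) (δ : ℝ) (U : Set n) : Prop :=
  ∀ z : n → ℝ, support z ⊆ U →
    (1 - δ) * (z ⬝ᵥ z) ≤ M *ᵥ z ⬝ᵥ M *ᵥ z ∧ M *ᵥ z ⬝ᵥ M *ᵥ z ≤ (1 + δ) * (z ⬝ᵥ z)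

namespace IsRestrictedIsometryOn

variable {m n : Type*} [Fintype m] [Fintype n] {M : Matrix m n ℝ} {δ : ℝ} {U : Set n}
  {u w : n → ℝ}

theorem two_mul_dotProduct_mulVec_le (hM : IsRestrictedIsometryOn M δ U)
    (hu : support u ⊆ U) (hw : support w ⊆ U) (huw : u ⬝ᵥ w = 0) :
    2 * (M *ᵥ u ⬝ᵥ M *ᵥ w) ≤ δ * (u ⬝ᵥ u + w ⬝ᵥ w) := by
  have hplus := (hM (u + w) ((support_add u w).trans (Set.union_subset hu hw))).2
  have hminus := (hM (u - w) ((support_sub u w).trans (Set.union_subset hu hw))).1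
  rw [add_dotProduct_add_of_dotProduct_eq_zero huw] at hplus
  rw [sub_dotProduct_sub_of_dotProduct_eq_zero huw] at hminus
  have hpolar := four_mul_dotProduct_eq (M *ᵥ u) (M *ᵥ w)
  rw [← mulVec_add, ← mulVec_sub] at hpolar
  linarith

theorem dotProduct_mulVec_le (hM : IsRestrictedIsometryOn M δ U)
    (hu : support u ⊆ U) (hw : support w ⊆ U) (huw : u ⬝ᵥ w = 0) :
    M *ᵥ u ⬝ᵥ M *ᵥ w ≤ δ * √(u ⬝ᵥ u) * √(w ⬝ᵥ w) := by
  have hu0 : 0 ≤ u ⬝ᵥ u := Finset.sum_nonneg fun i _ => mul_self_nonneg (u i)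
  have hw0 : 0 ≤ w ⬝ᵥ w := Finset.sum_nonneg fun i _ => mul_self_nonneg (w i)
  rcases (mul_nonneg (Real.sqrt_nonneg (u ⬝ᵥ u)) (Real.sqrt_nonneg (w ⬝ᵥ w))).eq_or_lt
    with hab | hab
  · rcases mul_eq_zero.1 hab.symm with h | h
    · rw [Real.sqrt_eq_zero hu0, dotProduct_self_eq_zero] at h
      simp [h]
    · rw [Real.sqrt_eq_zero hw0, dotProduct_self_eq_zero] at h
      simp [h]
  have ha := Real.sq_sqrt hu0
  have hb := Real.sq_sqrt hw0
  set a := √(u ⬝ᵥ u)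
  set b := √(w ⬝ᵥ w)
  have key := hM.two_mul_dotProduct_mulVec_le (u := b • u) (w := a • w)
    ((support_smul_subset_right _ _).trans hu) ((support_smul_subset_right _ _).trans hw)
    (by simp [huw])
  simp only [mulVec_smul, smul_dotProduct, dotProduct_smul, smul_eq_mul, ← ha, ← hb] at key
  refine le_of_mul_le_mul_left ?_ hab
  linarith

theorem abs_dotProduct_mulVec_le (hM : IsRestrictedIsometryOn M δ U)
    (hu : support u ⊆ U) (hw : support w ⊆ U) (huw : u ⬝ᵥ w = 0) :
    |M *ᵥ u ⬝ᵥ M *ᵥ w| ≤ δ * √(u ⬝ᵥ u) * √(w ⬝ᵥ w) := by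
  have hneg := hM.dotProduct_mulVec_le (w := -w) hu (by rwa [support_neg]) (by simp [huw])
  simp only [mulVec_neg, dotProduct_neg, neg_dotProduct, neg_neg] at hneg
  exact abs_le.2 ⟨by linarith, hM.dotProduct_mulVec_le hu hw huw⟩

end IsRestrictedIsometryOn

theorem RIP_near_orthogonality
    {m n : ℕ} (M : Matrix (Fin m) (Fin n) ℝ) (s : ℕ) (δ : ℝ)
    (hRIP : ∀ z : Fin n → ℝ,
      (Finset.univ.filter (fun i => z i ≠ 0)).card ≤ s →
      (1 - δ) * ∑ i, (z i) ^ 2 ≤ ∑ i, (M.mulVec z i) ^ 2 ∧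
      ∑ i, (M.mulVec z i) ^ 2 ≤ (1 + δ) * ∑ i, (z i) ^ 2)
    (S T : Finset (Fin n)) (hST : Disjoint S T) (hcard : S.card + T.card ≤ s)
    (u w : Fin n → ℝ)
    (hu : ∀ i, i ∉ S → u i = 0) (hw : ∀ i, i ∉ T → w i = 0) :
    |∑ i, M.mulVec u i * M.mulVec w i|
      ≤ δ * Real.sqrt (∑ i, (u i) ^ 2) * Real.sqrt (∑ i, (w i) ^ 2) := by
  have hM : IsRestrictedIsometryOn M δ ↑(S ∪ T) := fun z hz => by
    have hsupp : (univ.filter fun i => z i ≠ 0) ⊆ S ∪ T := fun i hi =>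
      Finset.mem_coe.1 (hz (Finset.mem_filter.1 hi).2)
    simpa only [sum_sq_eq_dotProduct_self] using
      hRIP z ((card_le_card hsupp).trans ((card_union_of_disjoint hST).trans_le hcard))
  have huS : support u ⊆ S := support_subset_iff'.2 hu
  have hwT : support w ⊆ T := support_subset_iff'.2 hw
  have huw : u ⬝ᵥ w = 0 := dotProduct_eq_zero_of_disjoint_support
    ((Finset.disjoint_coe.2 hST).mono huS hwT)
  rw [sum_sq_eq_dotProduct_self, sum_sq_eq_dotProduct_self]
  exact hM.abs_dotProduct_mulVec_le (huS.trans (by simp)) (hwT.trans (by simp)) huw
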